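/- arXiv:1905.10961 — 2 statements merged into one kernel-verified Lean document; each statement's English description precedes it below -/
import Mathlib

section
/- Suppose Conditions 1 and 2 hold with 0 ≤ C < 1/2 and NGD is run with step size 0 < η ≤ (1-2C)/(1+C)². Then for every iteration k: (1) ‖θ(k) - θ(0)‖₂ ≤ 3‖y - u(0)‖₂ / √λmin(G(0)), and (2) λmin(G(k)) ≥ (4/9)·λmin(G(0)). -/
open Matrix MeasureTheory ProbabilityTheory Real
open scoped BigOperators ENNReal NNReal

/-- Euclidean norm of a finitely-indexed real vector. -/
noncomputable def enorm2 {ι : Type*} [Fintype ι] (v : ι → ℝ) : ℝ :=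
  Real.sqrt (∑ i, v i * v i)

/-- Euclidean norm of a vector in `Fin n → ℝ`. -/
noncomputable def vnorm {n : ℕ} (v : Fin n → ℝ) : ℝ := Real.sqrt (v ⬝ᵥ v)

/-- Spectral norm (ℓ²-operator norm) of a matrix. -/
noncomputable def specNorm {ι κ : Type*} [Fintype ι] [Fintype κ] (A : Matrix ι κ ℝ) : ℝ :=
  sSup {r : ℝ | ∃ v : κ → ℝ, enorm2 v = 1 ∧ r = enorm2 (A *ᵥ v)}

/-- Smallest eigenvalue of a symmetric matrix, via the Rayleigh quotient. -/
noncomputable def lamMin {n : ℕ} (A : Matrix (Fin n) (Fin n) ℝ) : ℝ :=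
  sInf {r : ℝ | ∃ v : Fin n → ℝ, vnorm v = 1 ∧ r = v ⬝ᵥ (A *ᵥ v)}

/-- Largest eigenvalue of a symmetric matrix, via the Rayleigh quotient. -/
noncomputable def lamMax {n : ℕ} (A : Matrix (Fin n) (Fin n) ℝ) : ℝ :=
  sSup {r : ℝ | ∃ v : Fin n → ℝ, vnorm v = 1 ∧ r = v ⬝ᵥ (A *ᵥ v)}

/-- Natural gradient descent iterates for a network with outputs `u`, Jacobian `J`,
targets `y`, step size `η`, starting at `θ0`. -/
noncomputable def ngd {n p : ℕ} (J : (Fin p → ℝ) → Matrix (Fin n) (Fin p) ℝ)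
    (u : (Fin p → ℝ) → Fin n → ℝ) (y : Fin n → ℝ) (η : ℝ) (θ0 : Fin p → ℝ) :
    ℕ → Fin p → ℝ
  | 0 => θ0
  | k + 1 =>
      ngd J u y η θ0 k -
        η • ((J (ngd J u y η θ0 k))ᵀ *ᵥ
          ((J (ngd J u y η θ0 k) * (J (ngd J u y η θ0 k))ᵀ)⁻¹ *ᵥ
            (u (ngd J u y η θ0 k) - y)))

/-! Write `L = √λmin(G(0))`, `r = u - y` and `R = 3‖r(0)‖ / L`. On the ball of radius `R` around
`θ(0)`, Condition 2 gives `‖J - J(0)‖ ≤ C L / 3 ≤ L / 3`, so `‖Jᵀ v‖ ≥ 2L/3 ‖v‖` and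
`λmin(G) ≥ 4 λmin(G(0)) / 9`. There an NGD step `η Jᵀ G⁻¹ r` has length at most `3 η ‖r‖ / (2L)`,
and since `J(k)` maps it to `η r(k)`, the mean value inequality gives
`‖r(k+1)‖ ≤ (1 - (1 - C) η) ‖r(k)‖`. Summing the geometric series of step lengths keeps every
iterate within `3 ‖r(0)‖ / (2 (1 - C) L) ≤ R` of `θ(0)` (this is where `C ≤ 1/2` enters), which
closes the induction. -/

open scoped Matrix.Norms.L2Operator
open WithLp

section EuclideanNorm
variable {n m : ℕ}

lemma enorm2_eq_norm_toLp {ι : Type*} [Fintype ι] (v : ι → ℝ) : enorm2 v = ‖toLp 2 v‖ := by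
  simp [enorm2, EuclideanSpace.norm_eq, sq]

lemma vnorm_eq_norm_toLp (v : Fin n → ℝ) : vnorm v = ‖toLp 2 v‖ := by
  rw [vnorm, norm_eq_sqrt_real_inner, EuclideanSpace.inner_toLp_toLp, star_trivial]

lemma vnorm_nonneg (v : Fin n → ℝ) : 0 ≤ vnorm v := Real.sqrt_nonneg _

lemma vnorm_add_le (v w : Fin n → ℝ) : vnorm (v + w) ≤ vnorm v + vnorm w := by
  simpa only [vnorm_eq_norm_toLp, toLp_add] using norm_add_le _ _

lemma vnorm_sub_le (v w : Fin n → ℝ) : vnorm (v - w) ≤ vnorm v + vnorm w := by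
  simpa only [vnorm_eq_norm_toLp, toLp_sub] using norm_sub_le _ _

lemma vnorm_smul (c : ℝ) (v : Fin n → ℝ) : vnorm (c • v) = |c| * vnorm v := by
  simp only [vnorm_eq_norm_toLp, toLp_smul, norm_smul, Real.norm_eq_abs]

lemma vnorm_sub_comm (v w : Fin n → ℝ) : vnorm (v - w) = vnorm (w - v) := by
  simp only [vnorm_eq_norm_toLp, toLp_sub, norm_sub_rev]

lemma sq_vnorm (v : Fin n → ℝ) : vnorm v ^ 2 = v ⬝ᵥ v := by
  rw [vnorm_eq_norm_toLp, ← real_inner_self_eq_norm_sq, EuclideanSpace.inner_toLp_toLp,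
    star_trivial]

lemma dotProduct_le_vnorm_mul_vnorm (v w : Fin n → ℝ) : v ⬝ᵥ w ≤ vnorm v * vnorm w := by
  rw [vnorm_eq_norm_toLp, vnorm_eq_norm_toLp, dotProduct_comm, ← star_trivial v,
    ← EuclideanSpace.inner_toLp_toLp]
  exact real_inner_le_norm _ _

lemma vnorm_mulVec_le (A : Matrix (Fin m) (Fin n) ℝ) (v : Fin n → ℝ) :
    vnorm (A *ᵥ v) ≤ ‖A‖ * vnorm v := by
  rw [vnorm_eq_norm_toLp, vnorm_eq_norm_toLp]
  exact A.l2_opNorm_mulVec (toLp 2 v)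

lemma specNorm_eq_l2_opNorm {ι κ : Type*} [Fintype ι] [Fintype κ] [DecidableEq κ]
    (A : Matrix ι κ ℝ) : specNorm A = ‖A‖ := by
  rw [Matrix.l2_opNorm_def, ← ContinuousLinearMap.sSup_sphere_eq_norm, specNorm]
  congr 1
  ext r
  constructor
  · rintro ⟨v, hv, rfl⟩
    refine ⟨toLp 2 v, by simpa [← enorm2_eq_norm_toLp] using hv, ?_⟩
    simp [enorm2_eq_norm_toLp]
  · rintro ⟨x, hx, rfl⟩
    refine ⟨ofLp x, by simpa [enorm2_eq_norm_toLp] using hx, ?_⟩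
    simp [enorm2_eq_norm_toLp, Matrix.toLpLin_apply]

end EuclideanNorm

section RayleighMin
variable {n : ℕ}

lemma isCompact_rayleigh (G : Matrix (Fin n) (Fin n) ℝ) :
    IsCompact {r : ℝ | ∃ v : Fin n → ℝ, vnorm v = 1 ∧ r = v ⬝ᵥ (G *ᵥ v)} := by
  have hcont : Continuous fun x : EuclideanSpace ℝ (Fin n) => ofLp x ⬝ᵥ (G *ᵥ ofLp x) := by
    fun_prop
  convert (isCompact_sphere (0 : EuclideanSpace ℝ (Fin n)) 1).image hcont using 1
  ext r
  constructor
  · rintro ⟨v, hv, rfl⟩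
    exact ⟨toLp 2 v, by simpa [vnorm_eq_norm_toLp] using hv, rfl⟩
  · rintro ⟨x, hx, rfl⟩
    exact ⟨ofLp x, by simpa [vnorm_eq_norm_toLp] using hx, rfl⟩

lemma lamMin_le (G : Matrix (Fin n) (Fin n) ℝ) {v : Fin n → ℝ} (hv : vnorm v = 1) :
    lamMin G ≤ v ⬝ᵥ (G *ᵥ v) :=
  csInf_le (isCompact_rayleigh G).bddBelow ⟨v, hv, rfl⟩

lemma exists_lamMin_eq (hn : 0 < n) (G : Matrix (Fin n) (Fin n) ℝ) :
    ∃ v : Fin n → ℝ, vnorm v = 1 ∧ lamMin G = v ⬝ᵥ (G *ᵥ v) := by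
  have hne : {r : ℝ | ∃ v : Fin n → ℝ, vnorm v = 1 ∧ r = v ⬝ᵥ (G *ᵥ v)}.Nonempty := by
    refine ⟨_, Pi.single ⟨0, hn⟩ 1, ?_, rfl⟩
    simp [vnorm]
  exact (isCompact_rayleigh G).sInf_mem hne

lemma le_lamMin (hn : 0 < n) {G : Matrix (Fin n) (Fin n) ℝ} {c : ℝ}
    (h : ∀ v : Fin n → ℝ, vnorm v = 1 → c ≤ v ⬝ᵥ (G *ᵥ v)) : c ≤ lamMin G := by
  obtain ⟨v, hv, hG⟩ := exists_lamMin_eq hn G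
  exact hG ▸ h v hv

lemma lamMin_pos (hn : 0 < n) {G : Matrix (Fin n) (Fin n) ℝ} (hG : G.PosDef) : 0 < lamMin G := by
  obtain ⟨v, hv, hGv⟩ := exists_lamMin_eq hn G
  have hv0 : v ≠ 0 := by
    rintro rfl
    simp [vnorm] at hv
  simpa [hGv] using hG.dotProduct_mulVec_pos hv0

lemma lamMin_nonneg {G : Matrix (Fin n) (Fin n) ℝ} (hG : G.PosSemidef) : 0 ≤ lamMin G :=
  Real.sInf_nonneg fun _ ⟨v, _, hr⟩ => hr ▸ by simpa using hG.dotProduct_mulVec_nonneg v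

lemma lamMin_mul_sq_vnorm_le (G : Matrix (Fin n) (Fin n) ℝ) (v : Fin n → ℝ) :
    lamMin G * vnorm v ^ 2 ≤ v ⬝ᵥ (G *ᵥ v) := by
  rcases eq_or_ne v 0 with rfl | hv
  · simp [vnorm]
  have hpos : 0 < vnorm v := by
    rw [vnorm_eq_norm_toLp]
    exact norm_pos_iff.2 (by simpa using hv)
  have hunit : vnorm ((vnorm v)⁻¹ • v) = 1 := by
    rw [vnorm_smul, abs_inv, abs_of_pos hpos, inv_mul_cancel₀ hpos.ne']
  have := lamMin_le G hunit
  rw [mulVec_smul, dotProduct_smul, smul_dotProduct, smul_eq_mul, smul_eq_mul] at this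
  calc lamMin G * vnorm v ^ 2 ≤ (vnorm v)⁻¹ * ((vnorm v)⁻¹ * (v ⬝ᵥ (G *ᵥ v))) * vnorm v ^ 2 := by
        gcongr
    _ = v ⬝ᵥ (G *ᵥ v) := by field_simp

end RayleighMin

section Gram
variable {n p : ℕ}

lemma dotProduct_mul_transpose_mulVec (J : Matrix (Fin n) (Fin p) ℝ) (v : Fin n → ℝ) :
    v ⬝ᵥ ((J * Jᵀ) *ᵥ v) = vnorm (Jᵀ *ᵥ v) ^ 2 := by
  rw [sq_vnorm, ← mulVec_mulVec, dotProduct_mulVec, mulVec_transpose]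

lemma l2_opNorm_transpose (A : Matrix (Fin n) (Fin p) ℝ) : ‖Aᵀ‖ = ‖A‖ := by
  rw [← conjTranspose_eq_transpose_of_trivial, l2_opNorm_conjTranspose]

lemma sq_sub_le_lamMin_mul_transpose (hn : 0 < n) {J₀ J : Matrix (Fin n) (Fin p) ℝ} {L δ : ℝ}
    (hL : L ^ 2 ≤ lamMin (J₀ * J₀ᵀ)) (hJ : ‖J - J₀‖ ≤ δ) (hδ : δ ≤ L) :
    (L - δ) ^ 2 ≤ lamMin (J * Jᵀ) := by
  refine le_lamMin hn fun v hv => ?_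
  have hJ₀v : L ≤ vnorm (J₀ᵀ *ᵥ v) := by
    have := hL.trans (lamMin_le _ hv)
    rw [dotProduct_mul_transpose_mulVec] at this
    nlinarith [vnorm_nonneg (J₀ᵀ *ᵥ v)]
  have hdev : vnorm ((J - J₀)ᵀ *ᵥ v) ≤ δ := by
    calc vnorm ((J - J₀)ᵀ *ᵥ v) ≤ ‖(J - J₀)ᵀ‖ * vnorm v := vnorm_mulVec_le _ _
      _ = ‖J - J₀‖ := by rw [l2_opNorm_transpose, hv, mul_one]
      _ ≤ δ := hJ
  have htri : vnorm (J₀ᵀ *ᵥ v) ≤ vnorm (Jᵀ *ᵥ v) + vnorm ((J - J₀)ᵀ *ᵥ v) := by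
    simpa [transpose_sub, sub_mulVec] using vnorm_sub_le (Jᵀ *ᵥ v) ((J - J₀)ᵀ *ᵥ v)
  rw [dotProduct_mul_transpose_mulVec]
  exact pow_le_pow_left₀ (by linarith) (by linarith) 2

lemma posDef_mul_transpose_of_lamMin_pos {J : Matrix (Fin n) (Fin p) ℝ}
    (h : 0 < lamMin (J * Jᵀ)) : (J * Jᵀ).PosDef := by
  refine .of_dotProduct_mulVec_pos ?_ fun x hx => ?_
  · simpa [conjTranspose_eq_transpose_of_trivial] using isHermitian_mul_conjTranspose_self J
  · have hx' : 0 < vnorm x := by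
      rw [vnorm_eq_norm_toLp]
      exact norm_pos_iff.2 (by simpa using hx)
    simpa using (mul_pos h (pow_pos hx' 2)).trans_le (lamMin_mul_sq_vnorm_le _ x)

end Gram

section NaturalGradient
variable {n p : ℕ}

/-- The minimum-norm solution of `J d = r` when `J` has full row rank. -/
noncomputable def natGradDir (J : Matrix (Fin n) (Fin p) ℝ) (r : Fin n → ℝ) : Fin p → ℝ :=
  Jᵀ *ᵥ ((J * Jᵀ)⁻¹ *ᵥ r)

lemma mulVec_natGradDir {J : Matrix (Fin n) (Fin p) ℝ} (hJ : IsUnit (J * Jᵀ).det)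
    (r : Fin n → ℝ) : J *ᵥ natGradDir J r = r := by
  rw [natGradDir, mulVec_mulVec, mulVec_mulVec, mul_nonsing_inv _ hJ, one_mulVec]

lemma vnorm_natGradDir_le {J : Matrix (Fin n) (Fin p) ℝ} {μ : ℝ} (hμ : 0 < μ)
    (hJ : μ ^ 2 ≤ lamMin (J * Jᵀ)) (r : Fin n → ℝ) : vnorm (natGradDir J r) ≤ vnorm r / μ := by
  have hG := posDef_mul_transpose_of_lamMin_pos ((pow_pos hμ 2).trans_le hJ)
  set w := (J * Jᵀ)⁻¹ *ᵥ r
  have hGw : (J * Jᵀ) *ᵥ w = r := by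
    rw [mulVec_mulVec, mul_nonsing_inv _ ((isUnit_iff_isUnit_det _).1 hG.isUnit), one_mulVec]
  set d := natGradDir J r
  have hd : vnorm d ^ 2 = w ⬝ᵥ r := by
    rw [← hGw, dotProduct_mul_transpose_mulVec]
    rfl
  have hw : μ * vnorm w ≤ vnorm d := by
    have := (mul_le_mul_of_nonneg_right hJ (sq_nonneg (vnorm w))).trans
      (lamMin_mul_sq_vnorm_le _ w)
    rw [dotProduct_mul_transpose_mulVec, ← mul_pow] at this
    exact (pow_le_pow_iff_left₀ (mul_nonneg hμ.le (vnorm_nonneg w)) (vnorm_nonneg _)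
      two_ne_zero).1 this
  rw [le_div_iff₀ hμ]
  rcases (vnorm_nonneg d).eq_or_lt with h0 | hpos
  · rw [← h0, zero_mul]
    exact vnorm_nonneg r
  refine le_of_mul_le_mul_left ?_ hpos
  calc vnorm d * (vnorm d * μ) = μ * vnorm d ^ 2 := by ring
    _ ≤ μ * (vnorm w * vnorm r) := by
        rw [hd]
        exact mul_le_mul_of_nonneg_left (dotProduct_le_vnorm_mul_vnorm w r) hμ.le
    _ = μ * vnorm w * vnorm r := by ring
    _ ≤ vnorm d * vnorm r := mul_le_mul_of_nonneg_right hw (vnorm_nonneg r)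

lemma vnorm_smul_natGradDir_le {J : Matrix (Fin n) (Fin p) ℝ} {μ : ℝ} (hμ : 0 < μ)
    (hJ : μ ^ 2 ≤ lamMin (J * Jᵀ)) (hη : 0 ≤ η) (r : Fin n → ℝ) :
    vnorm (η • natGradDir J r) ≤ η * (vnorm r / μ) := by
  rw [vnorm_smul, abs_of_nonneg hη]
  exact mul_le_mul_of_nonneg_left (vnorm_natGradDir_le hμ hJ r) hη

end NaturalGradient

section MeanValue
variable {n p : ℕ}

lemma vnorm_sub_sub_mulVec_le {u : (Fin p → ℝ) → Fin n → ℝ}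
    {J : (Fin p → ℝ) → Matrix (Fin n) (Fin p) ℝ} {s : Set (Fin p → ℝ)} (hs : Convex ℝ s)
    (hu : ∀ θ ∈ s, HasFDerivAt u (LinearMap.toContinuousLinearMap ((J θ).mulVecLin)) θ)
    {B : Matrix (Fin n) (Fin p) ℝ} {c : ℝ} (hB : ∀ θ ∈ s, ‖J θ - B‖ ≤ c)
    {a b : Fin p → ℝ} (ha : a ∈ s) (hb : b ∈ s) :
    vnorm (u b - u a - B *ᵥ (b - a)) ≤ c * vnorm (b - a) := by
  let e := EuclideanSpace.equiv (Fin p) ℝ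
  let e' := EuclideanSpace.equiv (Fin n) ℝ
  let toCLM := (toEuclideanLin (𝕜 := ℝ) (m := Fin n) (n := Fin p)).trans
    LinearMap.toContinuousLinearMap
  have hderiv : ∀ x ∈ e ⁻¹' s, HasFDerivWithinAt (e'.symm ∘ u ∘ e) (toCLM (J (e x))) (e ⁻¹' s) x :=
    fun x hx => (e'.symm.hasFDerivAt.comp x ((hu _ hx).comp x e.hasFDerivAt)).hasFDerivWithinAt
  have hbound : ∀ x ∈ e ⁻¹' s, ‖toCLM (J (e x)) - toCLM B‖ ≤ c := fun x hx => by
    rw [← map_sub]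
    exact hB _ hx
  have := (hs.linear_preimage e.toLinearMap).norm_image_sub_le_of_norm_hasFDerivWithin_le'
    hderiv hbound (show e.symm a ∈ e ⁻¹' s by simpa using ha)
    (show e.symm b ∈ e ⁻¹' s by simpa using hb)
  rw [vnorm_eq_norm_toLp, vnorm_eq_norm_toLp]
  -- the transport through `toLp` is definitional
  exact this

end MeanValue

section NaturalGradientDescent
variable {n p : ℕ} {u : (Fin p → ℝ) → Fin n → ℝ} {J : (Fin p → ℝ) → Matrix (Fin n) (Fin p) ℝ}
  {y : Fin n → ℝ} {θ₀ : Fin p → ℝ} {C L η : ℝ}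

lemma vnorm_residual_natGrad_step_le {s : Set (Fin p → ℝ)} (hs : Convex ℝ s)
    (hu : ∀ θ ∈ s, HasFDerivAt u (LinearMap.toContinuousLinearMap ((J θ).mulVecLin)) θ)
    {θ : Fin p → ℝ} {μ : ℝ} (hμ : 0 < μ) (hlam : μ ^ 2 ≤ lamMin (J θ * (J θ)ᵀ))
    (hη0 : 0 ≤ η) (hη1 : η ≤ 1) (hdev : ∀ ξ ∈ s, ‖J ξ - J θ‖ ≤ C * μ) (hθ : θ ∈ s)
    (hθ' : θ - η • natGradDir (J θ) (u θ - y) ∈ s) :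
    vnorm (u (θ - η • natGradDir (J θ) (u θ - y)) - y) ≤
      (1 - (1 - C) * η) * vnorm (u θ - y) := by
  set r := u θ - y
  set θ' := θ - η • natGradDir (J θ) r
  have hdet : IsUnit (J θ * (J θ)ᵀ).det := (isUnit_iff_isUnit_det _).1
    (posDef_mul_transpose_of_lamMin_pos ((pow_pos hμ 2).trans_le hlam)).isUnit
  have hlin : J θ *ᵥ (θ' - θ) = -η • r := by
    rw [sub_sub_cancel_left, mulVec_neg, mulVec_smul, mulVec_natGradDir hdet, neg_smul]
  have hsplit : u θ' - y = (u θ' - u θ - J θ *ᵥ (θ' - θ)) + (1 - η) • r := by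
    rw [hlin]
    module
  have hstep : vnorm (θ' - θ) ≤ η * (vnorm r / μ) := by
    rw [vnorm_sub_comm, sub_sub_cancel]
    exact vnorm_smul_natGradDir_le hμ hlam hη0 r
  have hCμ : 0 ≤ C * μ := (norm_nonneg _).trans (hdev θ hθ)
  calc vnorm (u θ' - y)
      ≤ vnorm (u θ' - u θ - J θ *ᵥ (θ' - θ)) + vnorm ((1 - η) • r) := hsplit ▸ vnorm_add_le _ _
    _ ≤ C * μ * (η * (vnorm r / μ)) + (1 - η) * vnorm r := by
        rw [vnorm_smul, abs_of_nonneg (sub_nonneg.2 hη1)]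
        gcongr
        exact (vnorm_sub_sub_mulVec_le hs hu hdev hθ hθ').trans (by gcongr)
    _ = (1 - (1 - C) * η) * vnorm r := by
        field_simp
        ring

lemma convex_setOf_vnorm_sub_le (θ₀ : Fin p → ℝ) (R : ℝ) :
    Convex ℝ {θ | vnorm (θ - θ₀) ≤ R} := by
  have := (convex_closedBall (toLp 2 θ₀) R).is_linear_preimage
    (f := toLp 2) ⟨fun _ _ => rfl, fun _ _ => rfl⟩
  simpa [Set.preimage, vnorm_eq_norm_toLp, dist_eq_norm] using this

lemma ngd_succ (k : ℕ) : ngd J u y η θ₀ (k + 1) = ngd J u y η θ₀ k -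
    η • natGradDir (J (ngd J u y η θ₀ k)) (u (ngd J u y η θ₀ k) - y) := rfl

lemma ngd_eq_of_fin_zero (J : (Fin p → ℝ) → Matrix (Fin 0) (Fin p) ℝ)
    (u : (Fin p → ℝ) → Fin 0 → ℝ) (y : Fin 0 → ℝ) (k : ℕ) : ngd J u y η θ₀ k = θ₀ := by
  induction k with
  | zero => rfl
  | succ k ih =>
    rw [ngd_succ, Subsingleton.elim (u _ - y) 0, natGradDir, mulVec_zero, mulVec_zero, smul_zero,
      sub_zero, ih]

lemma two_thirds_sq_le_lamMin (hn : 0 < n) {J₀ J : Matrix (Fin n) (Fin p) ℝ}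
    (hJ₀ : L ^ 2 ≤ lamMin (J₀ * J₀ᵀ)) (hJ : ‖J - J₀‖ ≤ L / 3) :
    (2 * L / 3) ^ 2 ≤ lamMin (J * Jᵀ) := by
  have hL : 0 ≤ L := by linarith [(norm_nonneg _).trans hJ]
  convert sq_sub_le_lamMin_mul_transpose hn hJ₀ hJ (by linarith) using 2
  ring

lemma one_sub_pow_mul_div_le_div {N ρ : ℝ} (hN : 0 ≤ N) (hL : 0 < L) (hC : C ≤ 1 / 2)
    (hρ : 0 ≤ ρ) (k : ℕ) : (1 - ρ ^ k) * (3 * N / (2 * (1 - C) * L)) ≤ 3 * N / L := by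
  have hN₃ : 0 ≤ 3 * N := by positivity
  calc (1 - ρ ^ k) * (3 * N / (2 * (1 - C) * L)) ≤ 3 * N / (2 * (1 - C) * L) :=
        mul_le_of_le_one_left (div_nonneg hN₃ (by nlinarith)) (by linarith [pow_nonneg hρ k])
    _ ≤ 3 * N / L := div_le_div_of_nonneg_left hN₃ hL (by nlinarith)

theorem ngd_geometric_bounds
    (hu : ∀ θ, HasFDerivAt u (LinearMap.toContinuousLinearMap ((J θ).mulVecLin)) θ)
    (hn : 0 < n) (hL : 0 < L) (hJ₀ : L ^ 2 ≤ lamMin (J θ₀ * (J θ₀)ᵀ)) (hC₀ : 0 ≤ C)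
    (hC : C ≤ 1 / 2) (hη₀ : 0 < η) (hη : η ≤ 1)
    (hstab : ∀ θ, vnorm (θ - θ₀) ≤ 3 * vnorm (y - u θ₀) / L → ‖J θ - J θ₀‖ ≤ C / 3 * L)
    (k : ℕ) :
    vnorm (ngd J u y η θ₀ k - θ₀) ≤
        (1 - (1 - (1 - C) * η) ^ k) * (3 * vnorm (y - u θ₀) / (2 * (1 - C) * L)) ∧
      vnorm (u (ngd J u y η θ₀ k) - y) ≤ (1 - (1 - C) * η) ^ k * vnorm (y - u θ₀) := by
  set N₀ := vnorm (y - u θ₀)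
  set ρ := 1 - (1 - C) * η
  set D := 3 * N₀ / (2 * (1 - C) * L)
  set s := {θ | vnorm (θ - θ₀) ≤ 3 * N₀ / L}
  have hρ₀ : 0 ≤ ρ := by nlinarith
  have hmem : ∀ θ j, vnorm (θ - θ₀) ≤ (1 - ρ ^ j) * D → θ ∈ s := fun θ j h =>
    h.trans (one_sub_pow_mul_div_le_div (vnorm_nonneg _) hL hC hρ₀ j)
  have hlam : ∀ θ ∈ s, (2 * L / 3) ^ 2 ≤ lamMin (J θ * (J θ)ᵀ) := fun θ hθ =>
    two_thirds_sq_le_lamMin hn hJ₀ ((hstab θ hθ).trans (by nlinarith))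
  induction k with
  | zero =>
    refine ⟨?_, ?_⟩
    · simp [ngd, vnorm]
    · rw [pow_zero, one_mul, vnorm_sub_comm]
      rfl
  | succ k ih =>
    obtain ⟨ih₁, ih₂⟩ := ih
    set θₖ := ngd J u y η θ₀ k
    have hθₖ : θₖ ∈ s := hmem θₖ k ih₁
    have hstep : vnorm (θₖ - ngd J u y η θ₀ (k + 1)) ≤ (1 - ρ) * ρ ^ k * D := by
      rw [ngd_succ, sub_sub_cancel]
      refine (vnorm_smul_natGradDir_le (by positivity) (hlam θₖ hθₖ) hη₀.le _).trans ?_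
      calc η * (vnorm (u θₖ - y) / (2 * L / 3)) ≤ η * (ρ ^ k * N₀ / (2 * L / 3)) := by gcongr
        _ = (1 - ρ) * ρ ^ k * D := by
          simp only [ρ, D]
          field_simp [show 1 - C ≠ 0 by linarith]
          ring
    have h₁ : vnorm (ngd J u y η θ₀ (k + 1) - θ₀) ≤ (1 - ρ ^ (k + 1)) * D :=
      calc vnorm (ngd J u y η θ₀ (k + 1) - θ₀)
          ≤ vnorm (θₖ - θ₀) + vnorm (θₖ - ngd J u y η θ₀ (k + 1)) := by
            simpa using vnorm_sub_le (θₖ - θ₀) (θₖ - ngd J u y η θ₀ (k + 1))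
        _ ≤ (1 - ρ ^ k) * D + (1 - ρ) * ρ ^ k * D := add_le_add ih₁ hstep
        _ = (1 - ρ ^ (k + 1)) * D := by ring
    refine ⟨h₁, ?_⟩
    have hdev : ∀ ξ ∈ s, ‖J ξ - J θₖ‖ ≤ C * (2 * L / 3) := fun ξ hξ =>
      calc ‖J ξ - J θₖ‖ ≤ ‖J ξ - J θ₀‖ + ‖J θₖ - J θ₀‖ := by
            simpa using norm_sub_le (J ξ - J θ₀) (J θₖ - J θ₀)
        _ ≤ C / 3 * L + C / 3 * L := add_le_add (hstab ξ hξ) (hstab θₖ hθₖ)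
        _ = C * (2 * L / 3) := by ring
    calc vnorm (u (ngd J u y η θ₀ (k + 1)) - y) ≤ ρ * vnorm (u θₖ - y) :=
          vnorm_residual_natGrad_step_le (convex_setOf_vnorm_sub_le θ₀ _) (fun θ _ => hu θ)
            (by positivity) (hlam θₖ hθₖ) hη₀.le hη hdev hθₖ (hmem _ _ h₁)
      _ ≤ ρ * (ρ ^ k * N₀) := by gcongr
      _ = ρ ^ (k + 1) * N₀ := by ring

theorem vnorm_ngd_sub_le
    (hu : ∀ θ, HasFDerivAt u (LinearMap.toContinuousLinearMap ((J θ).mulVecLin)) θ)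
    (hn : 0 < n) (hL : 0 < L) (hJ₀ : L ^ 2 ≤ lamMin (J θ₀ * (J θ₀)ᵀ)) (hC₀ : 0 ≤ C)
    (hC : C ≤ 1 / 2) (hη₀ : 0 < η) (hη : η ≤ 1)
    (hstab : ∀ θ, vnorm (θ - θ₀) ≤ 3 * vnorm (y - u θ₀) / L → ‖J θ - J θ₀‖ ≤ C / 3 * L)
    (k : ℕ) : vnorm (ngd J u y η θ₀ k - θ₀) ≤ 3 * vnorm (y - u θ₀) / L :=
  (ngd_geometric_bounds hu hn hL hJ₀ hC₀ hC hη₀ hη hstab k).1.trans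
    (one_sub_pow_mul_div_le_div (vnorm_nonneg _) hL hC (by nlinarith) k)

end NaturalGradientDescent

theorem ngd_invariants_general {n p : ℕ}
    (u : (Fin p → ℝ) → Fin n → ℝ) (J : (Fin p → ℝ) → Matrix (Fin n) (Fin p) ℝ)
    (hJ : ∀ θ, HasFDerivAt u (LinearMap.toContinuousLinearMap ((J θ).mulVecLin)) θ)
    (y : Fin n → ℝ) (θ0 : Fin p → ℝ)
    -- Condition 1
    (hG0 : (J θ0 * (J θ0)ᵀ).PosDef)
    -- Condition 2
    (C : ℝ) (hC0 : 0 ≤ C) (hC : C < 1 / 2)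
    (hstab : ∀ θ : Fin p → ℝ,
      vnorm (θ - θ0) ≤ 3 * vnorm (y - u θ0) / Real.sqrt (lamMin (J θ0 * (J θ0)ᵀ)) →
      specNorm (J θ - J θ0) ≤ C / 3 * Real.sqrt (lamMin (J θ0 * (J θ0)ᵀ)))
    (η : ℝ) (hη0 : 0 < η) (hη : η ≤ (1 - 2 * C) / (1 + C) ^ 2) :
    ∀ k : ℕ,
      vnorm (ngd J u y η θ0 k - θ0) ≤
          3 * vnorm (y - u θ0) / Real.sqrt (lamMin (J θ0 * (J θ0)ᵀ)) ∧
        4 / 9 * lamMin (J θ0 * (J θ0)ᵀ) ≤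
          lamMin (J (ngd J u y η θ0 k) * (J (ngd J u y η θ0 k))ᵀ) := by
  intro k
  rcases Nat.eq_zero_or_pos n with rfl | hn
  · -- with no outputs NGD never moves
    rw [ngd_eq_of_fin_zero, sub_self]
    exact ⟨by simp [vnorm], by linarith [lamMin_nonneg hG0.posSemidef]⟩
  set L := Real.sqrt (lamMin (J θ0 * (J θ0)ᵀ))
  have hlam₀ := lamMin_pos hn hG0
  have hL : 0 < L := Real.sqrt_pos.2 hlam₀
  have hL₀ : L ^ 2 = lamMin (J θ0 * (J θ0)ᵀ) := Real.sq_sqrt hlam₀.le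
  have hη₁ : η ≤ 1 := hη.trans (div_le_one_of_le₀ (by nlinarith) (by positivity))
  have hstab' : ∀ θ, vnorm (θ - θ0) ≤ 3 * vnorm (y - u θ0) / L → ‖J θ - J θ0‖ ≤ C / 3 * L :=
    fun θ hθ => specNorm_eq_l2_opNorm (J θ - J θ0) ▸ hstab θ hθ
  have hball : vnorm (ngd J u y η θ0 k - θ0) ≤ 3 * vnorm (y - u θ0) / L :=
    vnorm_ngd_sub_le hJ hn hL hL₀.le hC0 hC.le hη0 hη₁ hstab' k
  refine ⟨hball, ?_⟩
  calc 4 / 9 * lamMin (J θ0 * (J θ0)ᵀ) = (2 * L / 3) ^ 2 := by rw [← hL₀]; ring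
    _ ≤ _ := two_thirds_sq_le_lamMin hn hL₀.le ((hstab' _ hball).trans (by nlinarith))

/-- **Lemma (no circularity: both invariants hold throughout training).**
Under Conditions 1 and 2 with `0 ≤ C < 1/2` and step size `0 < η ≤ (1-2C)/(1+C)²`,
for every iteration `k`:
(1) `‖θ(k) - θ(0)‖ ≤ 3‖y - u(0)‖/√λmin(G(0))`, and
(2) `λmin(G(k)) ≥ (4/9) λmin(G(0))`. -/
theorem ngd_invariants {n p : ℕ}
    (u : (Fin p → ℝ) → Fin n → ℝ) (J : (Fin p → ℝ) → Matrix (Fin n) (Fin p) ℝ)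
    (hJ : ∀ θ, HasFDerivAt u (LinearMap.toContinuousLinearMap ((J θ).mulVecLin)) θ)
    (hJcont : Continuous J)
    (y : Fin n → ℝ) (θ0 : Fin p → ℝ)
    -- Condition 1
    (hG0 : (J θ0 * (J θ0)ᵀ).PosDef)
    -- Condition 2
    (C : ℝ) (hC0 : 0 ≤ C) (hC : C < 1 / 2)
    (hstab : ∀ θ : Fin p → ℝ,
      vnorm (θ - θ0) ≤ 3 * vnorm (y - u θ0) / Real.sqrt (lamMin (J θ0 * (J θ0)ᵀ)) →
      specNorm (J θ - J θ0) ≤ C / 3 * Real.sqrt (lamMin (J θ0 * (J θ0)ᵀ)))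
    (η : ℝ) (hη0 : 0 < η) (hη : η ≤ (1 - 2 * C) / (1 + C) ^ 2) :
    ∀ k : ℕ,
      vnorm (ngd J u y η θ0 k - θ0) ≤
          3 * vnorm (y - u θ0) / Real.sqrt (lamMin (J θ0 * (J θ0)ᵀ)) ∧
        4 / 9 * lamMin (J θ0 * (J θ0)ᵀ) ≤
          lamMin (J (ngd J u y η θ0 k) * (J (ngd J u y η θ0 k))ᵀ) :=
  ngd_invariants_general u J hJ y θ0 hG0 C hC0 hC hstab η hη0 hη
end

section
/- Let θ : [0, ∞) → ℝ^p be a differentiable curve solving the natural gradient flow θ'(t) = J(θ(t))ᵀ G(θ(t))⁻¹ (y - u(θ(t))), where G(θ(t)) is invertible for every t ≥ 0. Then the output residual satisfies (d/dt) u(θ(t)) = y - u(θ(t)) for all t, and consequently ‖y - u(θ(t))‖₂² = e^{-2t} · ‖y - u(θ(0))‖₂² for all t ≥ 0. -/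
open Matrix MeasureTheory ProbabilityTheory Real
open scoped BigOperators ENNReal NNReal

/-!
Since `J Jᵀ G⁻¹ = 1`, the chain rule makes the outputs `u(θ(t))` move with velocity exactly the
residual `r = y - u(θ)`. The residual therefore solves `r' = -r`; as `eᵗ r(t)` has derivative zero,
`r(t) = e^{-t} r(0)` and `‖r(t)‖² = e^{-2t} ‖r(0)‖²`.
-/

theorem Matrix.mulVec_mulVec_nonsing_inv_mulVec {m k R : Type*} [Fintype m] [DecidableEq m]
    [Fintype k] [CommRing R] {A : Matrix m k R} {B : Matrix k m R} (h : IsUnit (A * B))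
    (v : m → R) : A *ᵥ (B *ᵥ ((A * B)⁻¹ *ᵥ v)) = v := by
  rw [mulVec_mulVec, mulVec_mulVec, mul_nonsing_inv _ ((isUnit_iff_isUnit_det _).mp h),
    one_mulVec]

theorem hasDerivAt_comp_naturalGradient {n p : ℕ} {u : (Fin p → ℝ) → Fin n → ℝ}
    {J : Matrix (Fin n) (Fin p) ℝ} {θ : ℝ → Fin p → ℝ} {t : ℝ} {r : Fin n → ℝ}
    (hu : HasFDerivAt u (LinearMap.toContinuousLinearMap J.mulVecLin) (θ t))
    (hθ : HasDerivAt θ (Jᵀ *ᵥ ((J * Jᵀ)⁻¹ *ᵥ r)) t) (hG : IsUnit (J * Jᵀ)) :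
    HasDerivAt (fun s => u (θ s)) r t := by
  have h := hu.comp_hasDerivAt t hθ
  rwa [LinearMap.coe_toContinuousLinearMap', mulVecLin_apply,
    mulVec_mulVec_nonsing_inv_mulVec hG] at h

theorem eq_exp_neg_smul_of_hasDerivAt_neg {E : Type*} [NormedAddCommGroup E] [NormedSpace ℝ E]
    {f : ℝ → E} (hf : ∀ t, 0 ≤ t → HasDerivAt f (-f t) t) {t : ℝ} (ht : 0 ≤ t) :
    f t = exp (-t) • f 0 := by
  have hconst_deriv : ∀ s, 0 ≤ s → HasDerivAt (fun s => exp s • f s) 0 s := fun s hs => by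
    have h := (hasDerivAt_exp s).smul (hf s hs)
    rwa [smul_neg, neg_add_cancel] at h
  have hconst : exp t • f t = exp 0 • f 0 :=
    constant_of_has_deriv_right_zero
      (fun s hs => (hconst_deriv s hs.1).continuousAt.continuousWithinAt)
      (fun s hs => (hconst_deriv s hs.1).hasDerivWithinAt) t ⟨ht, le_rfl⟩
  rw [exp_zero, one_smul] at hconst
  rw [← hconst, smul_smul, ← exp_add, neg_add_cancel, exp_zero, one_smul]

theorem vnorm_sq {n : ℕ} (v : Fin n → ℝ) : vnorm v ^ 2 = v ⬝ᵥ v :=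
  sq_sqrt (Finset.sum_nonneg fun i _ => mul_self_nonneg (v i))

theorem vnorm_smul_sq {n : ℕ} (c : ℝ) (v : Fin n → ℝ) : vnorm (c • v) ^ 2 = c ^ 2 * vnorm v ^ 2 := by
  rw [vnorm_sq, vnorm_sq, smul_dotProduct, dotProduct_smul, smul_eq_mul, smul_eq_mul, sq,
    mul_assoc]

theorem natural_gradient_flow_convergence_general {n p : ℕ}
    (u : (Fin p → ℝ) → Fin n → ℝ) (J : (Fin p → ℝ) → Matrix (Fin n) (Fin p) ℝ)
    (hJ : ∀ θ, HasFDerivAt u (LinearMap.toContinuousLinearMap ((J θ).mulVecLin)) θ)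
    (y : Fin n → ℝ)
    (θ : ℝ → Fin p → ℝ)
    (hflow : ∀ t : ℝ, 0 ≤ t →
      HasDerivAt θ
        ((J (θ t))ᵀ *ᵥ ((J (θ t) * (J (θ t))ᵀ)⁻¹ *ᵥ (y - u (θ t)))) t)
    (hinv : ∀ t : ℝ, 0 ≤ t → IsUnit (J (θ t) * (J (θ t))ᵀ)) :
    (∀ t : ℝ, 0 ≤ t → HasDerivAt (fun s => u (θ s)) (y - u (θ t)) t) ∧
      ∀ t : ℝ, 0 ≤ t →
        vnorm (y - u (θ t)) ^ 2 = Real.exp (-2 * t) * vnorm (y - u (θ 0)) ^ 2 := by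
  have houtput : ∀ t, 0 ≤ t → HasDerivAt (fun s => u (θ s)) (y - u (θ t)) t := fun t ht =>
    hasDerivAt_comp_naturalGradient (hJ (θ t)) (hflow t ht) (hinv t ht)
  refine ⟨houtput, fun t ht => ?_⟩
  have hresidual : y - u (θ t) = exp (-t) • (y - u (θ 0)) :=
    eq_exp_neg_smul_of_hasDerivAt_neg (fun s hs => (houtput s hs).const_sub y) ht
  rw [hresidual, vnorm_smul_sq, ← exp_nat_mul]
  congr 2
  push_cast
  ring

/-- **Lemma (natural gradient flow converges linearly in function space).**
If `θ(t)` solves the natural gradient flow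
`θ'(t) = J(θ(t))ᵀ G(θ(t))⁻¹ (y - u(θ(t)))` with `G(θ(t))` invertible for all `t ≥ 0`,
then `(d/dt) u(θ(t)) = y - u(θ(t))` and
`‖y - u(θ(t))‖² = e^{-2t} ‖y - u(θ(0))‖²` for all `t ≥ 0`. -/
theorem natural_gradient_flow_convergence {n p : ℕ}
    (u : (Fin p → ℝ) → Fin n → ℝ) (J : (Fin p → ℝ) → Matrix (Fin n) (Fin p) ℝ)
    (hJ : ∀ θ, HasFDerivAt u (LinearMap.toContinuousLinearMap ((J θ).mulVecLin)) θ)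
    (hJcont : Continuous J)
    (y : Fin n → ℝ)
    (θ : ℝ → Fin p → ℝ)
    (hflow : ∀ t : ℝ, 0 ≤ t →
      HasDerivAt θ
        ((J (θ t))ᵀ *ᵥ ((J (θ t) * (J (θ t))ᵀ)⁻¹ *ᵥ (y - u (θ t)))) t)
    (hinv : ∀ t : ℝ, 0 ≤ t → IsUnit (J (θ t) * (J (θ t))ᵀ)) :
    (∀ t : ℝ, 0 ≤ t → HasDerivAt (fun s => u (θ s)) (y - u (θ t)) t) ∧
      ∀ t : ℝ, 0 ≤ t →
        vnorm (y - u (θ t)) ^ 2 = Real.exp (-2 * t) * vnorm (y - u (θ 0)) ^ 2 :=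
  natural_gradient_flow_convergence_general u J hJ y θ hflow hinv
end
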